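/- If M is a compact, connected, positively invariant, locally accessible set containing at least two invariant control sets, then for every invariant control set C_k ⊂ M the set [𝒜(C_k) ∩ M] \ 𝒜_strict(C_k) is nonempty; hence for every invariant control set C_k there is another invariant control set C_i ≠ C_k with 𝒜(C_k) ∩ 𝒜(C_i) ≠ ∅. -/

import Mathlib

open MeasureTheory Set Topology

/-- A control-affine system `ẋ = f₀(x) + ∑ vᵢ(t) fᵢ(x)` on `ℝ^d` with Lipschitz
continuous vector fields and compact control range `V ⊆ ℝ^m`.  The (unique, global)
solutions are bundled as the data `φ` together with their defining properties. -/
structure CAS (d m : ℕ) where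
  /-- the drift vector field -/
  f0 : (Fin d → ℝ) → (Fin d → ℝ)
  /-- the control vector fields -/
  f : Fin m → (Fin d → ℝ) → (Fin d → ℝ)
  /-- the control range -/
  V : Set (Fin m → ℝ)
  lip0 : ∃ K, LipschitzWith K f0
  lip : ∀ i, ∃ K, LipschitzWith K (f i)
  V_compact : IsCompact V
  /-- the solution map: `φ x v t` is the solution at time `t` starting at `x` with control `v` -/
  φ : (Fin d → ℝ) → (ℝ → (Fin m → ℝ)) → ℝ → (Fin d → ℝ)
  φ_init : ∀ x v, φ x v 0 = x
  φ_cont : ∀ x v, Continuous (φ x v)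
  /-- solutions are (Carathéodory) solutions of the ODE -/
  φ_sol : ∀ (x : Fin d → ℝ) (v : ℝ → (Fin m → ℝ)), Measurable v → (∀ t, v t ∈ V) →
    ∀ t, 0 ≤ t →
      φ x v t = x + ∫ s in (0:ℝ)..t, (f0 (φ x v s) + ∑ i, v s i • f (i) (φ x v s))

namespace CAS

variable {d m : ℕ}

/-- the set of admissible controls -/
def ctrl (S : CAS d m) : Set (ℝ → (Fin m → ℝ)) :=
  {v | Measurable v ∧ ∀ t, v t ∈ S.V}

/-- a control is piecewise constant if it has only finitely many discontinuities on
every bounded interval, i.e. it is constant between the members of a sequence of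
switching times tending to infinity -/
def PiecewiseConst (v : ℝ → (Fin m → ℝ)) : Prop :=
  ∃ τ : ℕ → ℝ, τ 0 = 0 ∧ StrictMono τ ∧ Filter.Tendsto τ Filter.atTop Filter.atTop ∧
    ∀ n, ∀ t ∈ Ico (τ n) (τ (n + 1)), v t = v (τ n)

/-- the reachable set from `x` -/
def reach (S : CAS d m) (x : Fin d → ℝ) : Set (Fin d → ℝ) :=
  {y | ∃ v ∈ S.ctrl, ∃ t ≥ (0:ℝ), S.φ x v t = y}

/-- the set reachable from `x` with piecewise constant controls -/
def reachPC (S : CAS d m) (x : Fin d → ℝ) : Set (Fin d → ℝ) :=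
  {y | ∃ v ∈ S.ctrl, PiecewiseConst v ∧ ∃ t ≥ (0:ℝ), S.φ x v t = y}

/-- the reachable set from `x` up to time `T` -/
def reachLe (S : CAS d m) (T : ℝ) (x : Fin d → ℝ) : Set (Fin d → ℝ) :=
  {y | ∃ v ∈ S.ctrl, ∃ t ∈ Icc (0:ℝ) T, S.φ x v t = y}

/-- the controllable set to `x` up to time `T` -/
def contrLe (S : CAS d m) (T : ℝ) (x : Fin d → ℝ) : Set (Fin d → ℝ) :=
  {y | ∃ v ∈ S.ctrl, ∃ t ∈ Icc (0:ℝ) T, S.φ y v t = x}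

/-- positive invariance of a set -/
def posInv (S : CAS d m) (M : Set (Fin d → ℝ)) : Prop :=
  ∀ x ∈ M, ∀ v ∈ S.ctrl, ∀ t ≥ (0:ℝ), S.φ x v t ∈ M

/-- invariance of a set -/
def inv (S : CAS d m) (M : Set (Fin d → ℝ)) : Prop :=
  ∀ t ≥ (0:ℝ), {y | ∃ x ∈ M, ∃ v ∈ S.ctrl, S.φ x v t = y} = M

/-- the two defining properties (i) controlled invariance and (ii) approximate
reachability of a control set -/
def controlSetProps (S : CAS d m) (D : Set (Fin d → ℝ)) : Prop :=
  (∀ x ∈ D, ∃ v ∈ S.ctrl, ∀ t ≥ (0:ℝ), S.φ x v t ∈ D) ∧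
  (∀ x ∈ D, D ⊆ closure (S.reach x))

/-- a control set: a maximal nonempty set with the properties `controlSetProps` -/
def isControlSet (S : CAS d m) (D : Set (Fin d → ℝ)) : Prop :=
  D.Nonempty ∧ S.controlSetProps D ∧
  ∀ D', D ⊆ D' → S.controlSetProps D' → D' = D

/-- an invariant control set -/
def isInvControlSet (S : CAS d m) (C : Set (Fin d → ℝ)) : Prop :=
  S.isControlSet C ∧ ∀ x ∈ C, closure C = closure (S.reach x)

/-- local accessibility at a point -/
def locAccAt (S : CAS d m) (x : Fin d → ℝ) : Prop :=
  ∀ T > (0:ℝ), ∀ N ∈ 𝓝 x,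
    (interior (S.reachLe T x) ∩ N).Nonempty ∧ (interior (S.contrLe T x) ∩ N).Nonempty

/-- local accessibility on a set -/
def locAccOn (S : CAS d m) (M : Set (Fin d → ℝ)) : Prop :=
  ∀ x ∈ M, S.locAccAt x

/-- the domain of attraction of a set -/
def domAttr (S : CAS d m) (C : Set (Fin d → ℝ)) : Set (Fin d → ℝ) :=
  {x | (closure (S.reach x) ∩ C).Nonempty}

/-- the strict domain of attraction of an invariant control set -/
def domAttrStrict (S : CAS d m) (C : Set (Fin d → ℝ)) : Set (Fin d → ℝ) :=
  {x | (closure (S.reach x) ∩ C).Nonempty ∧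
    ∀ C', S.isInvControlSet C' → (closure (S.reach x) ∩ C').Nonempty → C' = C}

end CAS

/-!
The domain of attraction of an invariant control set `C ⊆ M` is open: by local accessibility,
`x` is attracted by `C` iff some trajectory from `x` enters the open set `interior (closure C)`,
and by Grönwall's inequality trajectories depend continuously on their initial value. Every
point of `M` is attracted by some invariant control set, a minimal closed forward-invariant
subset of the compact set `closure (reach x)` (Zorn). So the connected set `M` is covered by
the open set `𝒜(C_k)` and the union of the open sets `𝒜(C)` over the other invariant control
sets `C ⊆ M`, both of which meet `M`; a common point lies in `𝒜(C_k)` but not in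
`𝒜_strict(C_k)`.
-/

theorem le_mul_exp_of_le_add_mul_integral {g : ℝ → ℝ} {δ K T : ℝ} (hg : Continuous g)
    (hK : 0 ≤ K) (h : ∀ t ∈ Icc 0 T, g t ≤ δ + K * ∫ s in (0:ℝ)..t, g s) :
    ∀ t ∈ Icc 0 T, g t ≤ δ * Real.exp (K * t) := by
  set F : ℝ → ℝ := fun t => δ + K * ∫ s in (0:ℝ)..t, g s
  have hF : ∀ t, HasDerivAt F (K * g t) t := fun t =>
    ((hg.integral_hasStrictDerivAt 0 t).hasDerivAt.const_mul K).const_add δ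
  have hFle : ∀ t ∈ Icc 0 T, F t ≤ gronwallBound δ K 0 (t - 0) :=
    le_gronwallBound_of_liminf_deriv_right_le
      (fun t _ => (hF t).continuousAt.continuousWithinAt)
      (fun t _ _ hr => (hF t).hasDerivWithinAt.liminf_right_slope_le hr) (by simp [F])
      (fun t ht => by simpa using mul_le_mul_of_nonneg_left (h t (Ico_subset_Icc_self ht)) hK)
  intro t ht
  calc g t ≤ F t := h t ht
    _ ≤ δ * Real.exp (K * t) := by simpa [gronwallBound_ε0] using hFle t ht

namespace CAS

variable {d m : ℕ} (S : CAS d m)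

def field (w : Fin m → ℝ) (x : Fin d → ℝ) : Fin d → ℝ :=
  S.f0 x + ∑ i, w i • S.f i x

theorem φ_eq_add_integral {v : ℝ → Fin m → ℝ} (hv : v ∈ S.ctrl) (x : Fin d → ℝ) {t : ℝ}
    (ht : 0 ≤ t) : S.φ x v t = x + ∫ s in (0:ℝ)..t, S.field (v s) (S.φ x v s) :=
  S.φ_sol x v hv.1 hv.2 t ht

theorem continuous_field : Continuous fun p : (Fin m → ℝ) × (Fin d → ℝ) => S.field p.1 p.2 := by
  have h0 : Continuous S.f0 := S.lip0.choose_spec.continuous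
  have hf : ∀ i, Continuous (S.f i) := fun i => (S.lip i).choose_spec.continuous
  unfold field
  fun_prop

theorem exists_lipschitz_field :
    ∃ L, 0 ≤ L ∧ ∀ w ∈ S.V, ∀ x y, ‖S.field w x - S.field w y‖ ≤ L * ‖x - y‖ := by
  obtain ⟨R, hR, hVR⟩ := S.V_compact.isBounded.exists_pos_norm_le
  obtain ⟨K₀, hK₀⟩ := S.lip0
  choose K hK using S.lip
  refine ⟨K₀ + R * ∑ i, K i, by positivity, fun w hw x y => ?_⟩
  have hterm : ∀ i, ‖w i • (S.f i x - S.f i y)‖ ≤ R * (K i * ‖x - y‖) := fun i =>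
    calc ‖w i • (S.f i x - S.f i y)‖ = ‖w i‖ * ‖S.f i x - S.f i y‖ := norm_smul _ _
      _ ≤ R * (K i * ‖x - y‖) :=
        mul_le_mul ((norm_le_pi_norm w i).trans (hVR w hw))
          ((hK i).norm_sub_le x y) (norm_nonneg _) hR.le
  calc ‖S.field w x - S.field w y‖
      = ‖(S.f0 x - S.f0 y) + ∑ i, w i • (S.f i x - S.f i y)‖ := by
        simp only [field, smul_sub, Finset.sum_sub_distrib]; abel_nf
    _ ≤ K₀ * ‖x - y‖ + ∑ i, R * (K i * ‖x - y‖) :=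
        (norm_add_le _ _).trans (add_le_add (hK₀.norm_sub_le x y)
          ((norm_sum_le _ _).trans (Finset.sum_le_sum fun i _ => hterm i)))
    _ = (K₀ + R * ∑ i, K i) * ‖x - y‖ := by
        push_cast
        simp only [add_mul, Finset.mul_sum, Finset.sum_mul, mul_assoc]

theorem intervalIntegrable_field {v : ℝ → Fin m → ℝ} (hv : v ∈ S.ctrl) {z : ℝ → Fin d → ℝ}
    (hz : Continuous z) (a b : ℝ) :
    IntervalIntegrable (fun s => S.field (v s) (z s)) volume a b := by
  obtain ⟨C, hC⟩ := (S.V_compact.prod (isCompact_uIcc.image hz)).exists_bound_of_continuousOn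
    S.continuous_field.continuousOn
  have hmeas : Measurable fun s => S.field (v s) (z s) :=
    S.continuous_field.measurable.comp (hv.1.prodMk hz.measurable)
  rw [intervalIntegrable_iff]
  refine Measure.integrableOn_of_bounded (M := C) measure_Ioc_lt_top.ne
    hmeas.aestronglyMeasurable ?_
  filter_upwards [ae_restrict_mem measurableSet_uIoc] with s hs
  exact hC (v s, z s) ⟨hv.2 s, mem_image_of_mem z (uIoc_subset_uIcc hs)⟩

theorem shift_mem_ctrl {v : ℝ → Fin m → ℝ} (hv : v ∈ S.ctrl) (t₀ : ℝ) :
    (fun s => v (t₀ + s)) ∈ S.ctrl :=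
  ⟨hv.1.comp (measurable_const_add t₀), fun s => hv.2 (t₀ + s)⟩

def IsSolutionOn (v : ℝ → Fin m → ℝ) (a : ℝ → Fin d → ℝ) (T : ℝ) : Prop :=
  ∀ t ∈ Icc 0 T, a t = a 0 + ∫ s in (0:ℝ)..t, S.field (v s) (a s)

theorem isSolutionOn_φ {v : ℝ → Fin m → ℝ} (hv : v ∈ S.ctrl) (x : Fin d → ℝ) (T : ℝ) :
    S.IsSolutionOn v (S.φ x v) T := fun t ht => by
  rw [S.φ_init]
  exact S.φ_eq_add_integral hv x ht.1

variable {S}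

theorem IsSolutionOn.norm_sub_le {L : ℝ} (hL0 : 0 ≤ L)
    (hL : ∀ w ∈ S.V, ∀ x y, ‖S.field w x - S.field w y‖ ≤ L * ‖x - y‖)
    {v : ℝ → Fin m → ℝ} (hv : v ∈ S.ctrl) {a b : ℝ → Fin d → ℝ} {T : ℝ}
    (ha : S.IsSolutionOn v a T) (hb : S.IsSolutionOn v b T)
    (ha_cont : Continuous a) (hb_cont : Continuous b) :
    ∀ t ∈ Icc 0 T, ‖a t - b t‖ ≤ ‖a 0 - b 0‖ * Real.exp (L * t) := by
  refine le_mul_exp_of_le_add_mul_integral (ha_cont.sub hb_cont).norm hL0 fun t ht => ?_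
  have hIa := S.intervalIntegrable_field hv ha_cont 0 t
  have hIb := S.intervalIntegrable_field hv hb_cont 0 t
  have hdiff : a t - b t = (a 0 - b 0) +
      ∫ s in (0:ℝ)..t, (S.field (v s) (a s) - S.field (v s) (b s)) := by
    rw [intervalIntegral.integral_sub hIa hIb, ha t ht, hb t ht]
    abel
  calc ‖a t - b t‖
      ≤ ‖a 0 - b 0‖ + ∫ s in (0:ℝ)..t, ‖S.field (v s) (a s) - S.field (v s) (b s)‖ := by
        rw [hdiff]
        exact (norm_add_le _ _).trans
          (add_le_add le_rfl (intervalIntegral.norm_integral_le_integral_norm ht.1))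
    _ ≤ ‖a 0 - b 0‖ + ∫ s in (0:ℝ)..t, L * ‖a s - b s‖ := by
        gcongr
        refine intervalIntegral.integral_mono_on ht.1 (hIa.sub hIb).norm ?_
          fun s _ => hL _ (hv.2 s) _ _
        exact (continuous_const.mul (ha_cont.sub hb_cont).norm).intervalIntegrable _ _
    _ = ‖a 0 - b 0‖ + L * ∫ s in (0:ℝ)..t, ‖a s - b s‖ := by
        rw [intervalIntegral.integral_const_mul]

theorem IsSolutionOn.eq_φ {v : ℝ → Fin m → ℝ} (hv : v ∈ S.ctrl) {a : ℝ → Fin d → ℝ} {T : ℝ}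
    (ha : S.IsSolutionOn v a T) (ha_cont : Continuous a) :
    ∀ t ∈ Icc 0 T, a t = S.φ (a 0) v t := by
  obtain ⟨L, hL0, hL⟩ := S.exists_lipschitz_field
  intro t ht
  have h := ha.norm_sub_le hL0 hL hv (S.isSolutionOn_φ hv (a 0) T) ha_cont (S.φ_cont _ v) t ht
  rwa [S.φ_init, sub_self, norm_zero, zero_mul, norm_le_zero_iff, sub_eq_zero] at h

variable (S)

theorem continuous_φ_initial {v : ℝ → Fin m → ℝ} (hv : v ∈ S.ctrl) {t : ℝ} (ht : 0 ≤ t) :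
    Continuous fun x => S.φ x v t := by
  obtain ⟨L, hL0, hL⟩ := S.exists_lipschitz_field
  refine (LipschitzWith.of_dist_le' (K := Real.exp (L * t)) fun x y => ?_).continuous
  have h := (S.isSolutionOn_φ hv x t).norm_sub_le hL0 hL hv (S.isSolutionOn_φ hv y t)
    (S.φ_cont x v) (S.φ_cont y v) t ⟨ht, le_rfl⟩
  rw [S.φ_init, S.φ_init] at h
  rw [dist_eq_norm, dist_eq_norm, mul_comm]
  exact h

theorem φ_congr_ctrl {v w : ℝ → Fin m → ℝ} (hv : v ∈ S.ctrl) (hw : w ∈ S.ctrl)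
    (x : Fin d → ℝ) {t : ℝ} (ht : 0 ≤ t) (hvw : EqOn v w (Ioo 0 t)) :
    S.φ x v t = S.φ x w t := by
  have hsol : S.IsSolutionOn w (S.φ x v) t := fun s hs => by
    rw [S.isSolutionOn_φ hv x t s hs]
    congr 1
    exact intervalIntegral.integral_congr_Ioo_of_le hs.1 fun r hr => by
      simp only [hvw (Ioo_subset_Ioo_right hs.2 hr)]
  simpa [S.φ_init] using hsol.eq_φ hw (S.φ_cont x v) t ⟨ht, le_rfl⟩

theorem φ_add {v : ℝ → Fin m → ℝ} (hv : v ∈ S.ctrl) (x : Fin d → ℝ) {t₁ t : ℝ}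
    (ht₁ : 0 ≤ t₁) (ht : 0 ≤ t) :
    S.φ x v (t₁ + t) = S.φ (S.φ x v t₁) (fun s => v (t₁ + s)) t := by
  have hsol : S.IsSolutionOn (fun s => v (t₁ + s)) (fun s => S.φ x v (t₁ + s)) t := by
    intro s hs
    have hI := S.intervalIntegrable_field hv (S.φ_cont x v)
    simp only [add_zero]
    rw [S.φ_eq_add_integral hv x (add_nonneg ht₁ hs.1), S.φ_eq_add_integral hv x ht₁,
      ← intervalIntegral.integral_add_adjacent_intervals (hI 0 t₁) (hI t₁ (t₁ + s)),
      intervalIntegral.integral_comp_add_left (fun r => S.field (v r) (S.φ x v r)), add_zero,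
      add_assoc]
  have hcont : Continuous fun s => S.φ x v (t₁ + s) := (S.φ_cont x v).comp (continuous_const_add t₁)
  simpa using hsol.eq_φ (S.shift_mem_ctrl hv t₁) hcont t ⟨ht, le_rfl⟩

theorem exists_φ_add_eq {u w : ℝ → Fin m → ℝ} (hu : u ∈ S.ctrl) (hw : w ∈ S.ctrl)
    (x : Fin d → ℝ) {t₁ t₂ : ℝ} (ht₁ : 0 ≤ t₁) (ht₂ : 0 ≤ t₂) :
    ∃ v ∈ S.ctrl, S.φ x v (t₁ + t₂) = S.φ (S.φ x u t₁) w t₂ := by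
  classical
  set v : ℝ → Fin m → ℝ := fun s => if s < t₁ then u s else w (s - t₁)
  have hv : v ∈ S.ctrl := by
    refine ⟨Measurable.ite measurableSet_Iio hu.1 (hw.1.comp (measurable_sub_const t₁)),
      fun s => ?_⟩
    by_cases hs : s < t₁
    · simpa [v, hs] using hu.2 s
    · simpa [v, hs] using hw.2 (s - t₁)
  refine ⟨v, hv, ?_⟩
  rw [S.φ_add hv x ht₁ ht₂, S.φ_congr_ctrl hv hu x ht₁ fun s hs => if_pos hs.2,
    S.φ_congr_ctrl (S.shift_mem_ctrl hv t₁) hw _ ht₂ fun s hs => ?_]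
  simp [v, hs.1.le]

theorem mem_reach_self (hc : S.ctrl.Nonempty) (x : Fin d → ℝ) : x ∈ S.reach x :=
  let ⟨v, hv⟩ := hc
  ⟨v, hv, 0, le_rfl, S.φ_init x v⟩

theorem reach_subset_of_mem {x y : Fin d → ℝ} (hy : y ∈ S.reach x) :
    S.reach y ⊆ S.reach x := by
  obtain ⟨u, hu, t₁, ht₁, rfl⟩ := hy
  rintro _ ⟨w, hw, t₂, ht₂, rfl⟩
  obtain ⟨v, hv, hvx⟩ := S.exists_φ_add_eq hu hw x ht₁ ht₂
  exact ⟨v, hv, t₁ + t₂, add_nonneg ht₁ ht₂, hvx⟩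

theorem closure_reach_subset_of_mem_closure {x y : Fin d → ℝ} (hy : y ∈ closure (S.reach x)) :
    closure (S.reach y) ⊆ closure (S.reach x) := by
  refine closure_minimal ?_ isClosed_closure
  rintro _ ⟨w, hw, t, ht, rfl⟩
  exact map_mem_closure (f := fun p => S.φ p w t) (S.continuous_φ_initial hw ht) hy fun p hp =>
    S.reach_subset_of_mem hp ⟨w, hw, t, ht, rfl⟩

theorem closure_reach_subset {M : Set (Fin d → ℝ)} (hMc : IsClosed M) (hM : S.posInv M)
    {x : Fin d → ℝ} (hx : x ∈ M) : closure (S.reach x) ⊆ M :=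
  closure_minimal (by rintro _ ⟨v, hv, t, ht, rfl⟩; exact hM x hx v hv t ht) hMc

theorem interior_reach_nonempty {x : Fin d → ℝ} (hx : S.locAccAt x) :
    (interior (S.reach x)).Nonempty := by
  obtain ⟨q, hq, -⟩ := (hx 1 one_pos univ Filter.univ_mem).1
  refine ⟨q, interior_mono ?_ hq⟩
  rintro _ ⟨v, hv, t, ht, rfl⟩
  exact ⟨v, hv, t, ht.1, rfl⟩

theorem ctrl_nonempty_of_isControlSet {D : Set (Fin d → ℝ)} (hD : S.isControlSet D) :
    S.ctrl.Nonempty :=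
  let ⟨x, hx⟩ := hD.1
  let ⟨v, hv, _⟩ := hD.2.1.1 x hx
  ⟨v, hv⟩

theorem isInvControlSet_of_forall_closure_reach_eq (hc : S.ctrl.Nonempty)
    {K : Set (Fin d → ℝ)} (hK : K.Nonempty) (h : ∀ y ∈ K, closure (S.reach y) = K) :
    S.isInvControlSet K := by
  obtain ⟨v₀, hv₀⟩ := hc
  obtain ⟨y₀, hy₀⟩ := hK
  have hKc : IsClosed K := h y₀ hy₀ ▸ isClosed_closure
  refine ⟨⟨⟨y₀, hy₀⟩, ⟨fun y hy => ⟨v₀, hv₀, fun t ht => ?_⟩, fun y hy => (h y hy).ge⟩,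
    fun D' hKD' hD' => ?_⟩, fun y hy => by rw [hKc.closure_eq, h y hy]⟩
  · exact h y hy ▸ subset_closure ⟨v₀, hv₀, t, ht, rfl⟩
  · exact ((hD'.2 y₀ (hKD' hy₀)).trans (h y₀ hy₀).le).antisymm hKD'

theorem exists_isInvControlSet_subset (hc : S.ctrl.Nonempty) {K₀ : Set (Fin d → ℝ)}
    (hne : K₀.Nonempty) (hcomp : IsCompact K₀)
    (hinv : ∀ y ∈ K₀, closure (S.reach y) ⊆ K₀) :
    ∃ C, S.isInvControlSet C ∧ C ⊆ K₀ := by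
  set 𝒮 : Set (Set (Fin d → ℝ)) :=
    {K | K ⊆ K₀ ∧ K.Nonempty ∧ IsClosed K ∧ ∀ y ∈ K, closure (S.reach y) ⊆ K}
  have hchains : ∀ c ⊆ 𝒮, IsChain (· ⊆ ·) c → c.Nonempty → ∃ lb ∈ 𝒮, ∀ K ∈ c, lb ⊆ K := by
    intro c hc𝒮 hchain hcne
    have : Nonempty c := hcne.to_subtype
    refine ⟨⋂₀ c, ⟨?_, ?_, ?_, ?_⟩, fun K hK => sInter_subset_of_mem hK⟩
    · obtain ⟨K, hK⟩ := hcne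
      exact (sInter_subset_of_mem hK).trans (hc𝒮 hK).1
    · exact IsCompact.nonempty_sInter_of_directed_nonempty_isCompact_isClosed
        (fun K hK L hL => (hchain.total hK hL).elim (fun h => ⟨K, hK, subset_rfl, h⟩)
          fun h => ⟨L, hL, h, subset_rfl⟩) (fun K hK => (hc𝒮 hK).2.1)
        (fun K hK => hcomp.of_isClosed_subset (hc𝒮 hK).2.2.1 (hc𝒮 hK).1)
        (fun K hK => (hc𝒮 hK).2.2.1)
    · exact isClosed_sInter fun K hK => (hc𝒮 hK).2.2.1
    · exact fun y hy => subset_sInter fun K hK => (hc𝒮 hK).2.2.2 y (hy K hK)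
  obtain ⟨K, -, hKmin⟩ :=
    zorn_superset_nonempty 𝒮 hchains K₀ ⟨subset_rfl, hne, hcomp.isClosed, hinv⟩
  obtain ⟨hKK₀, hKne, -, hKinv⟩ := hKmin.prop
  refine ⟨K, S.isInvControlSet_of_forall_closure_reach_eq hc hKne fun y hy => ?_, hKK₀⟩
  have hmem : closure (S.reach y) ∈ 𝒮 :=
    ⟨(hKinv y hy).trans hKK₀, ⟨y, subset_closure (S.mem_reach_self hc y)⟩, isClosed_closure,
      fun z hz => S.closure_reach_subset_of_mem_closure hz⟩
  exact (hKinv y hy).antisymm (hKmin.2 hmem (hKinv y hy))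

theorem closure_reach_subset_closure {C : Set (Fin d → ℝ)} (hC : S.isInvControlSet C)
    {z : Fin d → ℝ} (hz : z ∈ closure C) : closure (S.reach z) ⊆ closure C := by
  obtain ⟨c, hc⟩ := hC.1.1
  rw [hC.2 c hc] at hz ⊢
  exact S.closure_reach_subset_of_mem_closure hz

theorem subset_domAttr (hc : S.ctrl.Nonempty) (C : Set (Fin d → ℝ)) : C ⊆ S.domAttr C :=
  fun c hcC => ⟨c, subset_closure (S.mem_reach_self hc c), hcC⟩

theorem exists_isInvControlSet_mem_domAttr {M : Set (Fin d → ℝ)} (hMc : IsCompact M)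
    (hM : S.posInv M) (hc : S.ctrl.Nonempty) {x : Fin d → ℝ} (hx : x ∈ M) :
    ∃ C, S.isInvControlSet C ∧ C ⊆ M ∧ x ∈ S.domAttr C := by
  have hxM := S.closure_reach_subset hMc.isClosed hM hx
  obtain ⟨C, hC, hCx⟩ := S.exists_isInvControlSet_subset hc
    ⟨x, subset_closure (S.mem_reach_self hc x)⟩ (hMc.of_isClosed_subset isClosed_closure hxM)
    fun y hy => S.closure_reach_subset_of_mem_closure hy
  obtain ⟨c, hcC⟩ := hC.1.1
  exact ⟨C, hC, hCx.trans hxM, c, hCx hcC, hcC⟩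

theorem reach_inter_nonempty_of_mem_closure {C : Set (Fin d → ℝ)} (hC : S.isInvControlSet C)
    {p : Fin d → ℝ} (hp : p ∈ closure C) (hacc : S.locAccAt p) : (S.reach p ∩ C).Nonempty := by
  obtain ⟨q, hq⟩ := S.interior_reach_nonempty hacc
  have hqC : q ∈ closure C :=
    S.closure_reach_subset_closure hC hp (subset_closure (interior_subset hq))
  obtain ⟨z, hz, hzC⟩ := mem_closure_iff.1 hqC _ isOpen_interior hq
  exact ⟨z, interior_subset hz, hzC⟩

theorem reach_inter_interior_closure_nonempty {C : Set (Fin d → ℝ)} (hC : S.isInvControlSet C)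
    {c : Fin d → ℝ} (hc : c ∈ C) (hacc : S.locAccAt c) :
    (S.reach c ∩ interior (closure C)).Nonempty := by
  obtain ⟨q, hq⟩ := S.interior_reach_nonempty hacc
  rw [hC.2 c hc]
  exact ⟨q, interior_subset hq, interior_mono subset_closure hq⟩

theorem domAttr_eq {M : Set (Fin d → ℝ)} (hMc : IsClosed M) (hacc : S.locAccOn M)
    {C : Set (Fin d → ℝ)} (hC : S.isInvControlSet C) (hCM : C ⊆ M) :
    S.domAttr C = {x | (S.reach x ∩ interior (closure C)).Nonempty} := by
  ext x
  constructor
  · rintro ⟨c, hcx, hcC⟩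
    obtain ⟨_, ⟨v, hv, t, ht, rfl⟩, hO⟩ :=
      S.reach_inter_interior_closure_nonempty hC hcC (hacc c (hCM hcC))
    obtain ⟨p, hpO, hpx⟩ := mem_closure_iff.1 hcx _
      (isOpen_interior.preimage (S.continuous_φ_initial hv ht)) hO
    exact ⟨_, S.reach_subset_of_mem hpx ⟨v, hv, t, ht, rfl⟩, hpO⟩
  · rintro ⟨p, hpx, hpC⟩
    have hp : p ∈ closure C := interior_subset hpC
    obtain ⟨z, hzp, hzC⟩ :=
      S.reach_inter_nonempty_of_mem_closure hC hp (hacc p (closure_minimal hCM hMc hp))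
    exact ⟨z, subset_closure (S.reach_subset_of_mem hpx hzp), hzC⟩

theorem isOpen_domAttr {M : Set (Fin d → ℝ)} (hMc : IsClosed M) (hacc : S.locAccOn M)
    {C : Set (Fin d → ℝ)} (hC : S.isInvControlSet C) (hCM : C ⊆ M) : IsOpen (S.domAttr C) := by
  rw [S.domAttr_eq hMc hacc hC hCM, isOpen_iff_forall_mem_open]
  rintro x ⟨_, ⟨v, hv, t, ht, rfl⟩, hO⟩
  exact ⟨_, fun y hy => ⟨_, ⟨v, hv, t, ht, rfl⟩, hy⟩,
    isOpen_interior.preimage (S.continuous_φ_initial hv ht), hO⟩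

end CAS

/-- If `M` is a compact, connected, positively invariant, locally
accessible set containing at least two invariant control sets, then for every
invariant control set `C_k ⊆ M` the set `(𝒜(C_k) ∩ M) \ 𝒜_strict(C_k)` is nonempty;
hence there is another invariant control set `C_i ≠ C_k` with
`𝒜(C_k) ∩ 𝒜(C_i) ≠ ∅`. -/
theorem stmt14 {d m : ℕ} (S : CAS d m) (M : Set (Fin d → ℝ))
    (hMc : IsCompact M) (hMconn : IsConnected M) (hM : S.posInv M)
    (hacc : S.locAccOn M)
    (htwo : ∃ C₁ C₂, S.isInvControlSet C₁ ∧ C₁ ⊆ M ∧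
      S.isInvControlSet C₂ ∧ C₂ ⊆ M ∧ C₁ ≠ C₂) :
    ∀ Ck, S.isInvControlSet Ck → Ck ⊆ M →
      ((S.domAttr Ck ∩ M) \ S.domAttrStrict Ck).Nonempty ∧
      ∃ Ci, S.isInvControlSet Ci ∧ Ci ⊆ M ∧ Ci ≠ Ck ∧
        (S.domAttr Ck ∩ S.domAttr Ci).Nonempty := by
  intro Ck hCk hCkM
  obtain ⟨C₁, C₂, h₁, h₁M, h₂, h₂M, h₁₂⟩ := htwo
  have hc := S.ctrl_nonempty_of_isControlSet h₁.1
  obtain ⟨C', hC', hC'M, hC'k⟩ : ∃ C', S.isInvControlSet C' ∧ C' ⊆ M ∧ C' ≠ Ck := by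
    by_cases h : C₁ = Ck
    · exact ⟨C₂, h₂, h₂M, fun h₂k => h₁₂ (h.trans h₂k.symm)⟩
    · exact ⟨C₁, h₁, h₁M, h⟩
  set others := {C | S.isInvControlSet C ∧ C ⊆ M ∧ C ≠ Ck}
  have hcover : M ⊆ S.domAttr Ck ∪ ⋃ C ∈ others, S.domAttr C := fun x hx => by
    obtain ⟨C, hC, hCM, hxC⟩ := S.exists_isInvControlSet_mem_domAttr hMc hM hc hx
    by_cases h : C = Ck
    · exact Or.inl (h ▸ hxC)
    · exact Or.inr (mem_iUnion₂.2 ⟨C, ⟨hC, hCM, h⟩, hxC⟩)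
  obtain ⟨ck, hck⟩ := hCk.1.1
  obtain ⟨c', hc'⟩ := hC'.1.1
  obtain ⟨x, hxM, hxk, hxi⟩ := hMconn.isPreconnected _ _
    (S.isOpen_domAttr hMc.isClosed hacc hCk hCkM)
    (isOpen_biUnion fun C hC => S.isOpen_domAttr hMc.isClosed hacc hC.1 hC.2.1) hcover
    ⟨ck, hCkM hck, S.subset_domAttr hc Ck hck⟩
    ⟨c', hC'M hc', mem_iUnion₂.2 ⟨C', ⟨hC', hC'M, hC'k⟩, S.subset_domAttr hc C' hc'⟩⟩
  obtain ⟨Ci, ⟨hCi, hCiM, hCik⟩, hxCi⟩ := mem_iUnion₂.1 hxi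
  exact ⟨⟨x, ⟨hxk, hxM⟩, fun hs => hCik (hs.2 Ci hCi hxCi)⟩, Ci, hCi, hCiM, hCik, x, hxk, hxCi⟩
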